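/- Let A be a consistent layered automaton over a finite alphabet Σ, let q be a leaf state, and let σ and τ be longest suffix resolvers for Eve and Adam in ⟦A⟧, respectively. If an infinite word w is accepted (under layered acceptance) by the layered automaton A with the initial state of T₁ replaced by μ̂₁(q), then every σ-run of ⟦A⟧ over w starting from q satisfies the parity condition. Symmetrically, if w is rejected (under layered acceptance) by A with initial state μ̂₁(q), then every τ-run of ⟦A⟧ over w starting from q fails the parity condition. -/

import Mathlib

open scoped Classical

noncomputable section

/-! ### Infinite words and the parity condition -/

/-- The minimal value occurring infinitely often in a sequence of priorities;
for (eventually) bounded sequences this is the `liminf`. -/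
def minInfOften (pi : ℕ → ℕ) : ℕ := sInf {x : ℕ | ∀ N : ℕ, ∃ n : ℕ, N ≤ n ∧ pi n = x}

/-- The (min-)parity acceptance condition: the liminf of the priorities is even. -/
def ParityAccept (pi : ℕ → ℕ) : Prop := Even (minInfOften pi)

/-- Prepend a finite word to an infinite word. -/
def prependW {α : Type} (u : List α) (w : ℕ → α) : ℕ → α := fun i =>
  if h : i < u.length then u.get ⟨i, h⟩ else w (i - u.length)

/-- The prefix of length `n` of an infinite word, as a list. -/
def wordPrefix {α : Type} (w : ℕ → α) (n : ℕ) : List α := List.ofFn (fun i : Fin n => w i)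

/-- Drop the first `n` letters of an infinite word. -/
def wordDrop {α : Type} (w : ℕ → α) (n : ℕ) : ℕ → α := fun i => w (n + i)

/-- The periodic infinite word `v^ω` (junk if `v = []`). -/
def perWord {α : Type} [Inhabited α] (v : List α) : ℕ → α := fun i => v.getD (i % v.length) default

/-! ### Layered automata -/

/-- A layered automaton over the alphabet `α` with `d` layers.  The (disjoint) layers
are encoded by the function `layer : Q → [1,d]`; each layer is a deterministic
transition system (partial transition function `δ`, which stays inside the layer);
`μ` sends each state of layer `x+1` to its parent in layer `x` (and is the identity
on layer `1`) and is a morphism of transition systems; layer `1` is complete, carries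
the initial state, and all its states are reachable from the initial state. -/
structure Layered (Q α : Type) (d : ℕ) where
  layer : Q → ℕ
  layer_pos : ∀ q, 1 ≤ layer q
  layer_le : ∀ q, layer q ≤ d
  δ : Q → α → Option Q
  δ_layer : ∀ q a q', δ q a = some q' → layer q' = layer q
  μ : Q → Q
  μ_layer : ∀ q, 1 < layer q → layer (μ q) + 1 = layer q
  μ_id : ∀ q, layer q = 1 → μ q = q
  μ_morph : ∀ q a q', 1 < layer q → δ q a = some q' → δ (μ q) a = some (μ q')
  init : Q
  init_layer : layer init = 1
  complete1 : ∀ q a, layer q = 1 → (δ q a).isSome = true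
  reach1 : ∀ q, layer q = 1 →
    Relation.ReflTransGen (fun p p' => layer p = 1 ∧ ∃ a, δ p a = some p') init q

namespace Layered

variable {Q R α : Type} {d d' : ℕ}

/-- The run of the (deterministic) layer transition systems on a finite word. -/
def runList (A : Layered Q α d) : Q → List α → Option Q
  | q, [] => some q
  | q, a :: u =>
    match A.δ q a with
    | some q' => runList A q' u
    | none => none

/-- `μ̂_x q`: the ancestor of `q` in layer `x` (image under the composed morphisms). -/
def muHat (A : Layered Q α d) (x : ℕ) (q : Q) : Q := (A.μ)^[A.layer q - x] q

/-- A leaf state: a state that is not in the image of any of the morphisms `μ_x`. -/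
def IsLeaf (A : Layered Q α d) (q : Q) : Prop := ∀ p, 1 < A.layer p → A.μ p ≠ q

/-- `layer(q,a)`: the largest layer `x ≤ layer q` in which `δ_x (μ̂_x q) a` is defined. -/
def layerOf (A : Layered Q α d) (q : Q) (a : α) : ℕ :=
  Nat.findGreatest (fun x => (A.δ (A.muHat x q) a).isSome = true) (A.layer q)

/-- A state `p` is an ancestor of `q`. -/
def IsAncestor (A : Layered Q α d) (p q : Q) : Prop :=
  A.layer p ≤ A.layer q ∧ A.muHat (A.layer p) q = p

/-! #### Safe languages and strong acceptance -/

/-- Membership of a finite word in the `x`-safe language of `q`. -/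
def SafeFin (A : Layered Q α d) (x : ℕ) (q : Q) (u : List α) : Prop :=
  (A.runList (A.muHat x q) u).isSome = true

/-- Membership of an infinite word in the `x`-safe language of `q`. -/
def SafeInf (A : Layered Q α d) (x : ℕ) (q : Q) (w : ℕ → α) : Prop :=
  ∀ n : ℕ, A.SafeFin x q (wordPrefix w n)

/-- `w` is strongly accepted by the state `p` (which lies in the even layer `x = layer p`):
`w` is `x`-safe from `p` and no decomposition `w = u·w'` admits a state `p'` of layer `x+1`
with a `u`-run from `p` to the parent of `p'` in `T_x` such that `w'` is `(x+1)`-safe from `p'`. -/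
def StronglyAcc (A : Layered Q α d) (p : Q) (w : ℕ → α) : Prop :=
  Even (A.layer p) ∧ A.SafeInf (A.layer p) p w ∧
  ∀ (n : ℕ) (p' : Q), A.layer p' = A.layer p + 1 →
    A.runList p (wordPrefix w n) = some (A.μ p') →
    ¬ A.SafeInf (A.layer p') p' (wordDrop w n)

/-- `w` is strongly rejected by `p` (lying in an odd layer). -/
def StronglyRej (A : Layered Q α d) (p : Q) (w : ℕ → α) : Prop :=
  Odd (A.layer p) ∧ A.SafeInf (A.layer p) p w ∧
  ∀ (n : ℕ) (p' : Q), A.layer p' = A.layer p + 1 →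
    A.runList p (wordPrefix w n) = some (A.μ p') →
    ¬ A.SafeInf (A.layer p') p' (wordDrop w n)

/-- Consistency: no two states with the same layer-1 ancestor strongly accept
resp. strongly reject a common infinite word. -/
def Consistent (A : Layered Q α d) : Prop :=
  ¬ ∃ (p p' : Q) (w : ℕ → α), A.muHat 1 p = A.muHat 1 p' ∧
      A.StronglyAcc p w ∧ A.StronglyRej p' w

/-- `w` is ultimately safe in layer `x`, for the automaton started in the
layer-1 state `q0`. -/
def UltSafeFrom (A : Layered Q α d) (q0 : Q) (x : ℕ) (w : ℕ → α) : Prop :=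
  ∃ (n : ℕ) (p : Q), A.layer p = x ∧
    A.runList q0 (wordPrefix w n) = some (A.muHat 1 p) ∧
    A.SafeInf x p (wordDrop w n)

/-- Layered acceptance from `q0`: the maximal layer in which `w` is ultimately safe is even. -/
def LayeredAcceptFrom (A : Layered Q α d) (q0 : Q) (w : ℕ → α) : Prop :=
  ∃ x : ℕ, Even x ∧ A.UltSafeFrom q0 x w ∧ ∀ y : ℕ, A.UltSafeFrom q0 y w → y ≤ x

/-- Layered rejection from `q0`: the maximal layer in which `w` is ultimately safe is odd. -/
def LayeredRejectFrom (A : Layered Q α d) (q0 : Q) (w : ℕ → α) : Prop :=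
  ∃ x : ℕ, Odd x ∧ A.UltSafeFrom q0 x w ∧ ∀ y : ℕ, A.UltSafeFrom q0 y w → y ≤ x

/-! #### The semantics automaton `⟦A⟧` (a simple-by-priorities alternating parity automaton) -/

/-- The priority of the letter `a` in the state `q` of `⟦A⟧`. -/
def semPrio (A : Layered Q α d) (q : Q) (a : α) : ℕ := A.layerOf q a

/-- The transitions of `⟦A⟧` (between leaf states): `q —a→ q'` iff, for
`x = layer(q,a)`, we have `δ_x (μ̂_x q) a = μ̂_x q'`; the transition carries priority `x`. -/
def semStep (A : Layered Q α d) (q : Q) (a : α) (q' : Q) : Prop :=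
  A.IsLeaf q' ∧ A.δ (A.muHat (A.layerOf q a) q) a = some (A.muHat (A.layerOf q a) q')

/-- Runs of `⟦A⟧` over the infinite word `w`, starting in `p`. -/
def IsSemRun (A : Layered Q α d) (w : ℕ → α) (p : Q) (ρ : ℕ → Q) : Prop :=
  ρ 0 = p ∧ ∀ i : ℕ, A.semStep (ρ i) (w i) (ρ (i + 1))

/-- The sequence of priorities produced by a run of `⟦A⟧` over `w`. -/
def runPrios (A : Layered Q α d) (w : ℕ → α) (ρ : ℕ → Q) : ℕ → ℕ :=
  fun i => A.semPrio (ρ i) (w i)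

/-- A resolver for Eve in `⟦A⟧`: given the history (the finite run so far, as a list of
(state, letter) pairs), the current state and a letter of odd priority, it picks a successor. -/
def EveResolver (A : Layered Q α d) (σ : List (Q × α) → Q → α → Q) : Prop :=
  ∀ (h : List (Q × α)) (q : Q) (a : α), Odd (A.semPrio q a) → A.semStep q a (σ h q a)

/-- A resolver for Adam in `⟦A⟧` (resolving the even-priority steps). -/
def AdamResolver (A : Layered Q α d) (τ : List (Q × α) → Q → α → Q) : Prop :=
  ∀ (h : List (Q × α)) (q : Q) (a : α), Even (A.semPrio q a) → A.semStep q a (τ h q a)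

/-- A run is consistent with the Eve-resolver `σ`: every odd-priority step follows `σ`. -/
def ConsEve (A : Layered Q α d) (σ : List (Q × α) → Q → α → Q) (w : ℕ → α) (ρ : ℕ → Q) : Prop :=
  ∀ i : ℕ, Odd (A.semPrio (ρ i) (w i)) →
    ρ (i + 1) = σ (List.ofFn fun j : Fin i => (ρ (j : ℕ), w (j : ℕ))) (ρ i) (w i)

/-- A run is consistent with the Adam-resolver `τ`: every even-priority step follows `τ`. -/
def ConsAdam (A : Layered Q α d) (τ : List (Q × α) → Q → α → Q) (w : ℕ → α) (ρ : ℕ → Q) : Prop :=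
  ∀ i : ℕ, Even (A.semPrio (ρ i) (w i)) →
    ρ (i + 1) = τ (List.ofFn fun j : Fin i => (ρ (j : ℕ), w (j : ℕ))) (ρ i) (w i)

/-- Acceptance of `w` by `⟦A⟧` from the (leaf) state `p`: Eve has a winning strategy
in the game `G(⟦A⟧,w)`, i.e. a resolver all of whose consistent runs satisfy parity. -/
def SemAccept (A : Layered Q α d) (p : Q) (w : ℕ → α) : Prop :=
  ∃ σ : List (Q × α) → Q → α → Q, A.EveResolver σ ∧
    ∀ ρ : ℕ → Q, A.IsSemRun w p ρ → A.ConsEve σ w ρ → ParityAccept (A.runPrios w ρ)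

/-- Uniform semantic determinism: leaf states with the same layer-1 ancestor
recognise the same language in `⟦A⟧`. -/
def UnifSD (A : Layered Q α d) : Prop :=
  ∀ p q : Q, A.IsLeaf p → A.IsLeaf q → A.muHat 1 p = A.muHat 1 q →
    ∀ w : ℕ → α, (A.SemAccept p w ↔ A.SemAccept q w)

/-! #### Longest suffix resolvers -/

/-- `v` is a suffix-witness to `r`: the layer of `r` has a run labelled `v` ending in `r`. -/
def suffixReaches (A : Layered Q α d) (r : Q) (v : List α) : Prop :=
  ∃ p : Q, A.layer p = A.layer r ∧ A.runList p v = some r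

/-- The length of the longest suffix `v` of `u` such that the layer of `r` has a
run labelled `v` ending in `r`. -/
def longestSuffixLen (A : Layered Q α d) (u : List α) (r : Q) : ℕ :=
  Nat.findGreatest (fun k => k ≤ u.length ∧ A.suffixReaches r (u.drop (u.length - k))) u.length

/-- A longest suffix resolver for Eve, initialised to `u0`: a valid Eve-resolver that,
at a step of odd priority `x` after having read `v`, moves to an `a`-successor `q'`
maximising the length of the longest `(x+1)`-suffix of `u0·v·a` to `μ̂_{x+1} q'`. -/
def IsLongestSuffixResolverE (A : Layered Q α d) (u0 : List α)
    (σ : List (Q × α) → Q → α → Q) : Prop :=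
  A.EveResolver σ ∧
  ∀ (h : List (Q × α)) (q : Q) (a : α), Odd (A.semPrio q a) →
    ∀ q' : Q, A.semStep q a q' →
      A.longestSuffixLen (u0 ++ h.map Prod.snd ++ [a]) (A.muHat (A.semPrio q a + 1) q') ≤
      A.longestSuffixLen (u0 ++ h.map Prod.snd ++ [a]) (A.muHat (A.semPrio q a + 1) (σ h q a))

/-- A longest suffix resolver for Adam, initialised to `u0` (symmetric, for even priorities). -/
def IsLongestSuffixResolverA (A : Layered Q α d) (u0 : List α)
    (τ : List (Q × α) → Q → α → Q) : Prop :=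
  A.AdamResolver τ ∧
  ∀ (h : List (Q × α)) (q : Q) (a : α), Even (A.semPrio q a) →
    ∀ q' : Q, A.semStep q a q' →
      A.longestSuffixLen (u0 ++ h.map Prod.snd ++ [a]) (A.muHat (A.semPrio q a + 1) q') ≤
      A.longestSuffixLen (u0 ++ h.map Prod.snd ++ [a]) (A.muHat (A.semPrio q a + 1) (τ h q a))

/-! #### The random walk on `⟦A⟧` -/

/-- The uniform step probability of the random walk of `⟦A⟧`. -/
def stepProb (A : Layered Q α d) (q : Q) (a : α) (q' : Q) : ENNReal :=
  if A.semStep q a q' then ((Nat.card {p : Q // A.semStep q a p} : ENNReal))⁻¹ else 0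

/-- `m` is the Markov measure of the random walk of `⟦A⟧` over the word `w` started at `p`:
a probability measure on `ℕ → Q` whose cylinder probabilities are the products of the
uniform step probabilities. -/
def IsWalkMeasure [MeasurableSpace Q] (A : Layered Q α d) (w : ℕ → α) (p : Q)
    (m : MeasureTheory.Measure (ℕ → Q)) : Prop :=
  MeasureTheory.IsProbabilityMeasure m ∧
  ∀ (n : ℕ) (s : Fin (n + 1) → Q),
    m {ρ : ℕ → Q | ∀ i : Fin (n + 1), ρ (i : ℕ) = s i} =
      (if s 0 = p then 1 else 0) *
        ∏ i : Fin n, A.stepProb (s i.castSucc) (w (i : ℕ)) (s i.succ)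

/-! #### Normal form, centrality, safe minimality, central sequences -/

/-- Normal form: (N1) every layer `x ≥ 2` is a union of non-trivial SCCs, and
(N2) the safe language of every child is strictly smaller than that of its parent. -/
def NormalForm (A : Layered Q α d) : Prop :=
  ∀ q : Q, 2 ≤ A.layer q →
    (∀ (u : List α) (q' : Q), A.runList q u = some q' →
      ∃ v : List α, v ≠ [] ∧ A.runList q' v = some q) ∧
    (∀ p : Q, 1 < A.layer p → A.μ p = q →
      ∃ u : List α, (A.runList q u).isSome = true ∧ A.runList p u = none)

/-- Inclusion of `x`-safe languages. -/
def SafeLE (A : Layered Q α d) (x : ℕ) (p q : Q) : Prop :=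
  (∀ u : List α, A.SafeFin x p u → A.SafeFin x q u) ∧
  (∀ w : ℕ → α, A.SafeInf x p w → A.SafeInf x q w)

/-- Centralised: siblings (same parent) whose safe languages are included,
lie in the same SCC of their layer. -/
def Centralised (A : Layered Q α d) : Prop :=
  ∀ p q : Q, 2 ≤ A.layer p → A.layer q = A.layer p →
    A.muHat (A.layer p - 1) p = A.muHat (A.layer p - 1) q →
    A.SafeLE (A.layer p) p q →
    (∃ u : List α, A.runList p u = some q) ∧ (∃ v : List α, A.runList q v = some p)

/-- `L(p) = L(q)`: all leaves above (the layer-1 ancestor of) `p` and all leaves above `q`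
recognise the same language in `⟦A⟧`. -/
def LangEq1 (A : Layered Q α d) (p q : Q) : Prop :=
  ∀ l l' : Q, A.IsLeaf l → A.IsLeaf l' → A.muHat 1 l = A.muHat 1 p →
    A.muHat 1 l' = A.muHat 1 q → ∀ w : ℕ → α, (A.SemAccept l w ↔ A.SemAccept l' w)

/-- The equivalence `p ≈_x q`: language equivalence together with equality of all
`y`-safe languages for `2 ≤ y ≤ x`. -/
def ApproxEq (A : Layered Q α d) (x : ℕ) (p q : Q) : Prop :=
  A.LangEq1 p q ∧ ∀ y : ℕ, 2 ≤ y → y ≤ x →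
    ((∀ u : List α, A.SafeFin y p u ↔ A.SafeFin y q u) ∧
     (∀ w : ℕ → α, A.SafeInf y p w ↔ A.SafeInf y q w))

/-- Safe minimality: `≈_x`-equivalent states of the same layer are equal. -/
def SafeMinimal (A : Layered Q α d) : Prop :=
  ∀ p q : Q, A.layer p = A.layer q → A.ApproxEq (A.layer p) p q → p = q

/-- `z` is a central sequence for the state `p` (of layer `x = layer p`). -/
def IsCentralSeq (A : Layered Q α d) (p : Q) (z : List α) : Prop :=
  z ≠ [] ∧ A.runList p z = some p ∧
  (∀ q : Q, A.layer q = A.layer p →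
    A.muHat (A.layer p - 1) q = A.muHat (A.layer p - 1) p →
    (A.runList q z = some p ∨ A.runList q z = none)) ∧
  (∀ q' : Q, A.layer q' = A.layer p + 1 →
    A.muHat (A.layer p - 1) q' = A.muHat (A.layer p - 1) p →
    A.runList q' z = none)

end Layered

/-! ### Morphisms of layered automata -/

/-- A morphism of layered automata. -/
structure IsLayMorphism {Q R α : Type} {d d' : ℕ} (A : Layered Q α d) (B : Layered R α d')
    (φ : Q → R) : Prop where
  map_init : φ A.init = B.init
  map_step : ∀ q a q', A.δ q a = some q' → B.δ (φ q) a = some (φ q')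
  map_anc : ∀ p q, A.IsAncestor p q → B.IsAncestor (φ p) (φ q)

/-- A strong morphism of layered automata additionally preserves non-transitions. -/
def IsStrongLayMorphism {Q R α : Type} {d d' : ℕ} (A : Layered Q α d) (B : Layered R α d')
    (φ : Q → R) : Prop :=
  IsLayMorphism A B φ ∧ ∀ q a, A.δ q a = none → B.δ (φ q) a = none

/-- An isomorphism of layered automata: a bijection on states that restricts to
isomorphisms of the layer transition systems, preserves the initial state, and
commutes with the morphisms `μ`. -/
structure IsLayIso {Q R α : Type} {d d' : ℕ} (A : Layered Q α d) (B : Layered R α d')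
    (φ : Q ≃ R) : Prop where
  map_layer : ∀ q, B.layer (φ q) = A.layer q
  map_init : φ A.init = B.init
  map_mu : ∀ q, φ (A.μ q) = B.μ (φ q)
  map_step : ∀ q a, (A.δ q a).map φ = B.δ (φ q) a

/-- `L(⟦A⟧) = L(⟦B⟧)`: the semantics automata (with any choice of initial leaf states
above the respective initial states) accept the same infinite words. -/
def SemLangEq {Q R α : Type} {d d' : ℕ} (A : Layered Q α d) (B : Layered R α d') : Prop :=
  ∀ (p : Q) (q : R), A.IsLeaf p → A.muHat 1 p = A.init → B.IsLeaf q → B.muHat 1 q = B.init →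
    ∀ w : ℕ → α, (A.SemAccept p w ↔ B.SemAccept q w)

/-! ### Deterministic parity automata -/

/-- A deterministic parity automaton over `α` with priorities in `[1,d]`. -/
structure DPA (Q α : Type) (d : ℕ) where
  init : Q
  next : Q → α → Q
  prio : Q → α → ℕ
  prio_pos : ∀ q a, 1 ≤ prio q a
  prio_le : ∀ q a, prio q a ≤ d

namespace DPA

variable {Q α : Type} {d : ℕ}

/-- The unique run of a DPA on an infinite word. -/
def run (B : DPA Q α d) (w : ℕ → α) : ℕ → Q
  | 0 => B.init
  | n + 1 => B.next (run B w n) (w n)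

/-- Acceptance by a DPA: the priorities along the unique run satisfy parity. -/
def Accepts (B : DPA Q α d) (w : ℕ → α) : Prop :=
  ParityAccept (fun i => B.prio (B.run w i) (w i))

end DPA

/-- `L` is ω-regular: recognised by some deterministic parity automaton. -/
def IsOmegaRegular {α : Type} (L : Set (ℕ → α)) : Prop :=
  ∃ (n d : ℕ) (B : DPA (Fin n) α d), ∀ w : ℕ → α, w ∈ L ↔ B.Accepts w

/-! ### Nondeterministic coBüchi automata -/

/-- A (complete) nondeterministic coBüchi automaton: transitions carry priorities in `{1,2}`. -/
structure NCA (Q α : Type) where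
  init : Q
  trans : Q → α → ℕ → Q → Prop
  prio_mem : ∀ q a x q', trans q a x q' → x = 1 ∨ x = 2
  complete : ∀ q a, ∃ x q', trans q a x q'

namespace NCA

variable {Q α : Type}

/-- Nondeterministic acceptance from the state `q`. -/
def AcceptFrom (B : NCA Q α) (q : Q) (w : ℕ → α) : Prop :=
  ∃ (ρ : ℕ → Q) (pri : ℕ → ℕ), ρ 0 = q ∧
    (∀ i : ℕ, B.trans (ρ i) (w i) (pri i) (ρ (i + 1))) ∧ ParityAccept pri

/-- Semantic determinism: every `a`-successor of `p` recognises `a⁻¹ L(p)`. -/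
def SemDet (B : NCA Q α) : Prop :=
  ∀ p a x q, B.trans p a x q →
    ∀ w : ℕ → α, (B.AcceptFrom q w ↔ B.AcceptFrom p (prependW [a] w))

/-- Safe determinism: all `a`-transitions from a state carry the same priority, and
there is at most one `a`-transition of priority `2` from each state. -/
def SafeDet (B : NCA Q α) : Prop :=
  (∀ q a x q' x' q'', B.trans q a x q' → B.trans q a x' q'' → x = x') ∧
  (∀ q a q' q'', B.trans q a 2 q' → B.trans q a 2 q'' → q' = q'')

/-- 1-saturation: priority-1 transitions go to all language-equivalent states. -/
def OneSaturated (B : NCA Q α) : Prop :=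
  ∀ q a p p', B.trans q a 1 p →
    (∀ w : ℕ → α, (B.AcceptFrom p' w ↔ B.AcceptFrom p w)) → B.trans q a 1 p'

end NCA

/-! ### Simple-by-priorities alternating parity automata (abstract) -/

/-- A simple-by-priorities alternating parity automaton: a complete transition system
over `α × [1,d]` in which all `a`-transitions from a state carry the same priority. -/
structure SPA (Q α : Type) (d : ℕ) where
  init : Q
  step : Q → α → Q → Prop
  prio : Q → α → ℕ
  prio_pos : ∀ q a, 1 ≤ prio q a
  prio_le : ∀ q a, prio q a ≤ d
  complete : ∀ q a, ∃ q', step q a q'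

/-! ### The congruence on tuples of finite words -/

/-- The data of the congruence at one level (tuples of a fixed length,
represented as reversed lists of components: the head is the last component). -/
structure CongrLevel (α : Type) where
  bot : List (List α) → Prop
  eq : List (List α) → List (List α) → Prop
  ptd : List (List α) → Prop

/-- Concatenate a finite word to the last component of a tuple
(tuples are represented as reversed lists: the head is the last component). -/
def tcat {α : Type} (t : List (List α)) (v : List α) : List (List α) :=
  match t with
  | h :: rest => (h ++ v) :: rest
  | [] => []

/-- Merge the last two components of a tuple. -/
def tmerge {α : Type} (t : List (List α)) : List (List α) :=
  match t with
  | u' :: h :: rest => (h ++ u') :: rest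
  | t' => t'

/-- The congruence data at level `n` (handling tuples of length `n+1`), defined by
recursion on the level, following the inductive definition of `≈ ⊥`, `≈` and `pointed`. -/
def congrData {α : Type} [Inhabited α] (L : Set (ℕ → α)) : ℕ → CongrLevel α
  | 0 =>
    { bot := fun _ => False
      eq := fun t s =>
        match t, s with
        | [u], [v] => ∀ w : ℕ → α, (prependW u w ∈ L ↔ prependW v w ∈ L)
        | _, _ => False
      ptd := fun _ => True }
  | n + 1 =>
    let C := congrData L n
    let bot : List (List α) → Prop := fun t =>
      match t with
      | u' :: ubar =>
        C.bot (tmerge (u' :: ubar)) ∨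
        ∀ w : List α, w ≠ [] → C.eq (tcat (tmerge (u' :: ubar)) w) ubar →
          ((prependW ubar.reverse.flatten (perWord (u' ++ w)) ∈ L) ↔ Even (n + 1))
      | [] => True
    let eq : List (List α) → List (List α) → Prop := fun t s =>
      C.eq (tmerge t) (tmerge s) ∧ ∀ v : List α, (bot (tcat t v) ↔ bot (tcat s v))
    let ptd : List (List α) → Prop := fun t =>
      match t with
      | u' :: ubar =>
        ¬ bot (u' :: ubar) ∧ C.ptd ubar ∧
        ∀ (vbar : List (List α)) (v' : List α), vbar.length = n + 1 → C.ptd vbar →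
          C.eq (tcat vbar v') ubar → ¬ bot ((v' ++ u') :: vbar) →
          eq ((v' ++ u') :: vbar) (u' :: ubar)
      | [] => False
    { bot := bot, eq := eq, ptd := ptd }

/-- `t ≈ ⊥` (for a nonempty tuple `t`, in reversed representation). -/
def TupBot {α : Type} [Inhabited α] (L : Set (ℕ → α)) (t : List (List α)) : Prop :=
  (congrData L (t.length - 1)).bot t

/-- `t ≈ s` (for nonempty tuples of the same length, in reversed representation). -/
def TupEq {α : Type} [Inhabited α] (L : Set (ℕ → α)) (t s : List (List α)) : Prop :=
  t.length = s.length ∧ (congrData L (t.length - 1)).eq t s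

/-- `t` is pointed. -/
def TupPointed {α : Type} [Inhabited α] (L : Set (ℕ → α)) (t : List (List α)) : Prop :=
  (congrData L (t.length - 1)).ptd t

/-- `cls` exhibits `A` as (a copy of) the congruence automaton `A_≈` of `L`: its states
are the `≈`-classes of pointed tuples (the layer being the tuple length), transitions
are given by concatenation in the last component, the initial state is the class of
`(ε)`, and the morphisms are given by merging the last two components. -/
structure IsCongrAut {α : Type} [Inhabited α] (L : Set (ℕ → α)) {Q : Type} {d : ℕ}
    (A : Layered Q α d) (cls : (t : List (List α)) → TupPointed L t → Q) : Prop where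
  surj : ∀ q : Q, ∃ (t : List (List α)) (ht : TupPointed L t), cls t ht = q
  cls_eq : ∀ t ht s hs, cls t ht = cls s hs ↔ TupEq L t s
  layer_eq : ∀ t ht, A.layer (cls t ht) = t.length
  init_eq : ∀ h : TupPointed L [([] : List α)], cls [([] : List α)] h = A.init
  step_some : ∀ t ht (a : α) (h' : TupPointed L (tcat t [a])),
    A.δ (cls t ht) a = some (cls (tcat t [a]) h')
  step_none : ∀ t ht (a : α), TupBot L (tcat t [a]) → A.δ (cls t ht) a = none
  mu_eq : ∀ (u' : List α) (ubar : List (List α)) (h : TupPointed L (u' :: ubar))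
    (h' : TupPointed L (tmerge (u' :: ubar))), ubar ≠ [] →
    A.μ (cls (u' :: ubar) h) = cls (tmerge (u' :: ubar)) h'

end

/-!
Let `l` be the least priority seen infinitely often by a run `ρ` of `⟦A⟧`. From some position `N`
on, `ρ` only sees priorities `≥ l`, so its projection to layer `l` is a run of `T_l` and the rest of
the word is `l`-safe from `μ̂_l (ρ N)`. It never becomes `(l+1)`-safe from a child of this
projection: the safe run of such a child offers the resolver, at every later priority-`l` step, a
successor with an `(l+1)`-suffix reaching back before the child started. So the resolver's choice
has such a suffix too; late enough, its `T_{l+1}`-run can no longer die, so it shadows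
`μ̂_{l+1} ρ` and keeps `δ_{l+1}` defined, and `ρ` never sees priority `l` again. Hence
`μ̂_l (ρ N)` strongly accepts or rejects the rest of the word according to the parity of `l`. The
state of the maximal layer `x` in which the word is ultimately safe does the same according to the
parity of `x`, and both have the same layer-1 ancestor, so consistency forces `l ≡ x (mod 2)`.
-/

open Filter

def wordSeg {α : Type} (w : ℕ → α) (s n : ℕ) : List α :=
  List.ofFn fun i : Fin (n - s) => w (s + i)

section Words

variable {α : Type} (w : ℕ → α)

@[simp] lemma length_wordSeg (s n : ℕ) : (wordSeg w s n).length = n - s := by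
  simp [wordSeg]

@[simp] lemma getElem_wordSeg (s n i : ℕ) (h : i < (wordSeg w s n).length) :
    (wordSeg w s n)[i] = w (s + i) := by
  simp [wordSeg]

@[simp] lemma length_wordPrefix (n : ℕ) : (wordPrefix w n).length = n := by
  simp [wordPrefix]

lemma drop_wordPrefix (s n : ℕ) : (wordPrefix w n).drop s = wordSeg w s n := by
  apply List.ext_getElem <;> simp [wordPrefix]

lemma wordPrefix_eq_wordSeg (n : ℕ) : wordPrefix w n = wordSeg w 0 n := by
  simpa using drop_wordPrefix w 0 n

lemma wordPrefix_wordDrop (s n : ℕ) : wordPrefix (wordDrop w s) n = wordSeg w s (s + n) := by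
  apply List.ext_getElem <;> simp [wordPrefix, wordDrop]

@[simp] lemma wordDrop_wordDrop (s n : ℕ) : wordDrop (wordDrop w s) n = wordDrop w (s + n) := by
  funext i
  simp [wordDrop, Nat.add_assoc]

lemma wordSeg_append_wordSeg {s m n : ℕ} (hsm : s ≤ m) (hmn : m ≤ n) :
    wordSeg w s m ++ wordSeg w m n = wordSeg w s n := by
  apply List.ext_getElem
  · simp only [List.length_append, length_wordSeg]
    omega
  · intro i _ _
    rw [List.getElem_append]
    split_ifs with h
    · simp
    · simp only [length_wordSeg] at h ⊢
      simp only [getElem_wordSeg]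
      congr 1
      omega

lemma wordSeg_succ {s n : ℕ} (h : s ≤ n) : wordSeg w s (n + 1) = wordSeg w s n ++ [w n] := by
  rw [← wordSeg_append_wordSeg w h n.le_succ]
  congr
  apply List.ext_getElem <;> simp

lemma wordPrefix_succ (n : ℕ) : wordPrefix w (n + 1) = wordPrefix w n ++ [w n] := by
  simp only [wordPrefix_eq_wordSeg, wordSeg_succ w n.zero_le]

lemma wordSeg_prefix_wordSeg (s : ℕ) {m n : ℕ} (h : m ≤ n) : wordSeg w s m <+: wordSeg w s n := by
  rcases le_total s m with hs | hs
  · exact ⟨_, wordSeg_append_wordSeg w hs h⟩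
  · rw [List.eq_nil_of_length_eq_zero (by simp [hs] : (wordSeg w s m).length = 0)]
    exact List.nil_prefix

end Words

lemma frequently_eq_minInfOften {pi : ℕ → ℕ} {d : ℕ} (hbd : ∀ n, pi n ≤ d) :
    ∃ᶠ n in atTop, pi n = minInfOften pi := by
  obtain ⟨x, -, hx⟩ :=
    ((Set.finite_Iic d).frequently_exists (p := fun x n => pi n = x)).1
      (Frequently.of_forall (f := atTop) fun n => ⟨pi n, hbd n, rfl⟩)
  exact frequently_atTop.2 (Nat.sInf_mem (s := {x | ∀ N, ∃ n, N ≤ n ∧ pi n = x})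
    ⟨x, frequently_atTop.1 hx⟩)

lemma eventually_minInfOften_le (pi : ℕ → ℕ) : ∀ᶠ n in atTop, minInfOften pi ≤ pi n := by
  have hrare : ∀ v ∈ Finset.range (minInfOften pi), ∀ᶠ n in atTop, pi n ≠ v := by
    intro v hv
    have hv' := Nat.notMem_of_lt_sInf (Finset.mem_range.1 hv)
    rw [Set.mem_ofPred_eq, ← frequently_atTop] at hv'
    exact not_frequently.1 hv'
  filter_upwards [(Finset.range _).eventually_all.2 hrare] with n hn
  by_contra hlt
  exact hn _ (Finset.mem_range.2 (not_le.1 hlt)) rfl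

namespace Layered

variable {Q α : Type} {d : ℕ}

section

variable (A : Layered Q α d)

lemma runList_cons (q : Q) (a : α) (u : List α) :
    A.runList q (a :: u) = (A.δ q a).bind fun r => A.runList r u := by
  cases h : A.δ q a <;> simp [runList, h]

lemma runList_singleton (q : Q) (a : α) : A.runList q [a] = A.δ q a := by
  rw [runList_cons]
  cases A.δ q a <;> rfl

lemma runList_append (q : Q) (u v : List α) :
    A.runList q (u ++ v) = (A.runList q u).bind fun r => A.runList r v := by
  induction u generalizing q with
  | nil => rfl
  | cons a u ih =>
    rw [List.cons_append, runList_cons, runList_cons]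
    cases A.δ q a <;> simp [ih]

lemma isSome_runList_of_prefix {q : Q} {u v : List α} (huv : u <+: v)
    (h : (A.runList q v).isSome) : (A.runList q u).isSome := by
  obtain ⟨t, rfl⟩ := huv
  rw [runList_append] at h
  cases hu : A.runList q u <;> simp_all

lemma eventually_forall_isSome_runList [Finite Q] (w : ℕ → α) (k : ℕ) :
    ∀ᶠ n in atTop, ∀ s ≤ k, ∀ p : Q,
      (A.runList p (wordSeg w s n)).isSome → ∀ m, (A.runList p (wordSeg w s m)).isSome := by
  have hpair : ∀ (s : ℕ) (p : Q), ∀ᶠ n in atTop,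
      (A.runList p (wordSeg w s n)).isSome → ∀ m, (A.runList p (wordSeg w s m)).isSome := by
    intro s p
    by_cases htot : ∀ m, (A.runList p (wordSeg w s m)).isSome
    · exact Eventually.of_forall fun _ _ => htot
    obtain ⟨m, hm⟩ := not_forall.1 htot
    filter_upwards [eventually_ge_atTop m] with n hn hsome
    exact absurd (A.isSome_runList_of_prefix (wordSeg_prefix_wordSeg w s hn) hsome) hm
  filter_upwards [eventually_all.2 fun s : Fin (k + 1) => eventually_all.2 (hpair s)]
    with n hn s hs p
  exact hn ⟨s, by omega⟩ p

end

variable {A : Layered Q α d}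

lemma layer_eq_of_runList_eq_some {q q' : Q} {u : List α} (h : A.runList q u = some q') :
    A.layer q' = A.layer q := by
  induction u generalizing q with
  | nil => cases h; rfl
  | cons a u ih =>
    rw [runList_cons] at h
    cases hδ : A.δ q a with
    | none => simp [hδ] at h
    | some r =>
      rw [hδ, Option.bind_some] at h
      rw [ih h, A.δ_layer q a r hδ]

lemma runList_μ {p p' : Q} {u : List α} (h : A.runList p u = some p') (hp : 1 < A.layer p) :
    A.runList (A.μ p) u = some (A.μ p') := by
  induction u generalizing p with
  | nil => cases h; rfl
  | cons a u ih =>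
    rw [runList_cons] at h ⊢
    cases hδ : A.δ p a with
    | none => simp [hδ] at h
    | some r =>
      rw [hδ, Option.bind_some] at h
      rw [A.μ_morph p a r hp hδ, Option.bind_some]
      exact ih h (by rwa [A.δ_layer p a r hδ])

lemma layer_iterate_μ {n : ℕ} {q : Q} (h : n < A.layer q) :
    A.layer (A.μ^[n] q) = A.layer q - n := by
  induction n with
  | zero => rfl
  | succ n ih =>
    rw [Function.iterate_succ_apply']
    have := A.μ_layer _ (by rw [ih (by omega)]; omega)
    rw [ih (by omega)] at this
    omega

lemma runList_iterate_μ {n : ℕ} {p p' : Q} {u : List α} (h : A.runList p u = some p')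
    (hn : n < A.layer p) : A.runList (A.μ^[n] p) u = some (A.μ^[n] p') := by
  induction n with
  | zero => exact h
  | succ n ih =>
    simp only [Function.iterate_succ_apply']
    exact runList_μ (ih (by omega)) (by rw [layer_iterate_μ (by omega)]; omega)

lemma muHat_of_layer_le {x : ℕ} {q : Q} (h : A.layer q ≤ x) : A.muHat x q = q := by
  simp [muHat, Nat.sub_eq_zero_of_le h]

lemma muHat_layer (q : Q) : A.muHat (A.layer q) q = q :=
  muHat_of_layer_le le_rfl

lemma muHat_eq_μ_muHat_succ {x : ℕ} {q : Q} (h : x < A.layer q) :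
    A.muHat x q = A.μ (A.muHat (x + 1) q) := by
  rw [muHat, muHat, ← Function.iterate_succ_apply' A.μ]
  congr 1
  omega

lemma layer_muHat {x : ℕ} {q : Q} (h1 : 1 ≤ x) (h2 : x ≤ A.layer q) :
    A.layer (A.muHat x q) = x := by
  rw [muHat, layer_iterate_μ (by omega)]
  omega

lemma muHat_muHat {x y : ℕ} {q : Q} (h1 : 1 ≤ y) (h2 : y ≤ x) (h3 : x ≤ A.layer q) :
    A.muHat y (A.muHat x q) = A.muHat y q := by
  rw [muHat, layer_muHat (h1.trans h2) h3, muHat, muHat, ← Function.iterate_add_apply]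
  congr 1
  omega

lemma muHat_one_μ {p : Q} (h : 1 < A.layer p) : A.muHat 1 (A.μ p) = A.muHat 1 p := by
  have hl : A.layer (A.μ p) = A.layer p - 1 := by
    have := A.μ_layer p h
    omega
  rw [muHat, muHat, hl, ← Function.iterate_succ_apply]
  congr 1
  omega

lemma runList_muHat {y : ℕ} {p p' : Q} {u : List α} (h : A.runList p u = some p')
    (h1 : 1 ≤ y) (h2 : y ≤ A.layer p) : A.runList (A.muHat y p) u = some (A.muHat y p') := by
  rw [muHat, muHat, layer_eq_of_runList_eq_some h]
  exact runList_iterate_μ h (by omega)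

lemma exists_isLeaf_muHat (t : Q) :
    ∃ l, A.IsLeaf l ∧ A.layer t ≤ A.layer l ∧ A.muHat (A.layer t) l = t := by
  induction hn : d - A.layer t generalizing t with
  | zero =>
    refine ⟨t, fun p hp hpt => ?_, le_rfl, muHat_layer t⟩
    have := A.μ_layer p hp
    have := A.layer_le p
    subst hpt
    omega
  | succ n ih =>
    by_cases hleaf : A.IsLeaf t
    · exact ⟨t, hleaf, le_rfl, muHat_layer t⟩
    obtain ⟨p, hp, hpt⟩ : ∃ p, 1 < A.layer p ∧ A.μ p = t := by
      simpa [IsLeaf] using hleaf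
    have hpl : A.layer p = A.layer t + 1 := by
      have := A.μ_layer p hp
      rw [hpt] at this
      omega
    obtain ⟨l, hl, hle, hlp⟩ := ih p (by have := A.layer_le p; omega)
    refine ⟨l, hl, by omega, ?_⟩
    rw [muHat_eq_μ_muHat_succ (by omega), ← hpl, hlp, hpt]

section

variable (A)

lemma layerOf_le_layer (q : Q) (a : α) : A.layerOf q a ≤ A.layer q :=
  Nat.findGreatest_le _

lemma one_le_layerOf (q : Q) (a : α) : 1 ≤ A.layerOf q a :=
  Nat.le_findGreatest (A.layer_pos q)
    (A.complete1 _ a (layer_muHat le_rfl (A.layer_pos q)))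

lemma runPrios_le (w : ℕ → α) (ρ : ℕ → Q) (i : ℕ) : A.runPrios w ρ i ≤ d :=
  (A.layerOf_le_layer _ _).trans (A.layer_le _)

end

lemma le_layerOf {q : Q} {a : α} {y : ℕ} (h1 : y ≤ A.layer q)
    (h2 : (A.δ (A.muHat y q) a).isSome) : y ≤ A.layerOf q a :=
  Nat.le_findGreatest h1 h2

lemma layerOf_le_layer_of_semStep {q q' : Q} {a : α} (h : A.semStep q a q') :
    A.layerOf q a ≤ A.layer q' := by
  have hlay := A.δ_layer _ a _ h.2
  rw [layer_muHat (A.one_le_layerOf q a) (A.layerOf_le_layer q a)] at hlay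
  by_contra hlt
  rw [muHat_of_layer_le (by omega)] at hlay
  omega

lemma δ_muHat_of_semStep {q q' : Q} {a : α} (h : A.semStep q a q') {y : ℕ} (h1 : 1 ≤ y)
    (h2 : y ≤ A.layerOf q a) : A.δ (A.muHat y q) a = some (A.muHat y q') := by
  have hx := A.layerOf_le_layer q a
  have hx' := layerOf_le_layer_of_semStep h
  rw [← muHat_muHat h1 h2 hx, ← muHat_muHat h1 h2 hx', ← runList_singleton]
  refine runList_muHat ?_ h1 ?_
  · rw [runList_singleton]
    exact h.2
  · rw [layer_muHat (h1.trans h2) hx]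
    exact h2

lemma semStep_of_muHat_eq {q q' q'' : Q} {a : α} (h : A.semStep q a q'') (hleaf : A.IsLeaf q')
    (heq : A.muHat (A.layerOf q a) q' = A.muHat (A.layerOf q a) q'') : A.semStep q a q' :=
  ⟨hleaf, heq ▸ h.2⟩

lemma IsSemRun.isLeaf {w : ℕ → α} {q : Q} {ρ : ℕ → Q} (hq : A.IsLeaf q)
    (hρ : A.IsSemRun w q ρ) : ∀ i, A.IsLeaf (ρ i)
  | 0 => hρ.1 ▸ hq
  | i + 1 => (hρ.2 i).1

lemma IsSemRun.runList_muHat {w : ℕ → α} {q : Q} {ρ : ℕ → Q} (hρ : A.IsSemRun w q ρ)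
    {y N : ℕ} (hy : 1 ≤ y) (hge : ∀ i, N ≤ i → y ≤ A.runPrios w ρ i) {m : ℕ} (hm : N ≤ m) :
    A.runList (A.muHat y (ρ N)) (wordSeg w N m) = some (A.muHat y (ρ m)) := by
  induction m, hm using Nat.le_induction with
  | base => simp [runList, wordSeg]
  | succ m hm ih =>
    rw [wordSeg_succ w hm, runList_append, ih, Option.bind_some, runList_singleton]
    exact δ_muHat_of_semStep (hρ.2 m) hy (hge m hm)

lemma safeInf_layer_wordDrop_iff {p : Q} {w : ℕ → α} {s : ℕ} :
    A.SafeInf (A.layer p) p (wordDrop w s) ↔ ∀ m, s ≤ m → (A.runList p (wordSeg w s m)).isSome := by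
  simp only [SafeInf, SafeFin, muHat_layer, wordPrefix_wordDrop]
  refine ⟨fun h m hm => ?_, fun h n => h _ (by omega)⟩
  simpa [Nat.add_sub_cancel' hm] using h (m - s)

lemma le_longestSuffixLen {w : ℕ → α} {n s : ℕ} {p r : Q} (hs : s ≤ n)
    (hp : A.layer p = A.layer r) (h : A.runList p (wordSeg w s n) = some r) :
    n - s ≤ A.longestSuffixLen (wordPrefix w n) r := by
  refine Nat.le_findGreatest (by simp) ⟨by simp, p, hp, ?_⟩
  rwa [length_wordPrefix, drop_wordPrefix, Nat.sub_sub_self hs]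

lemma exists_runList_of_longestSuffixLen_pos {w : ℕ → α} {n : ℕ} {r : Q}
    (h : 0 < A.longestSuffixLen (wordPrefix w n) r) :
    ∃ p, A.layer p = A.layer r ∧
      A.runList p (wordSeg w (n - A.longestSuffixLen (wordPrefix w n) r) n) = some r := by
  obtain ⟨-, p, hp, hrun⟩ := Nat.findGreatest_of_ne_zero
    (m := A.longestSuffixLen (wordPrefix w n) r) rfl h.ne'
  rw [length_wordPrefix, drop_wordPrefix] at hrun
  exact ⟨p, hp, hrun⟩

/-- `StronglyAcc p w` and `StronglyRej p w` are `StronglySafe p w` plus the parity of `layer p`. -/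
def StronglySafe (A : Layered Q α d) (p : Q) (w : ℕ → α) : Prop :=
  A.SafeInf (A.layer p) p w ∧
  ∀ (n : ℕ) (p' : Q), A.layer p' = A.layer p + 1 →
    A.runList p (wordPrefix w n) = some (A.μ p') → ¬ A.SafeInf (A.layer p') p' (wordDrop w n)

lemma Consistent.even_layer_iff (hA : A.Consistent) {p p' : Q} {w : ℕ → α}
    (h1 : A.muHat 1 p = A.muHat 1 p') (hp : A.StronglySafe p w) (hp' : A.StronglySafe p' w) :
    Even (A.layer p) ↔ Even (A.layer p') := by
  constructor <;> intro heven <;> by_contra hodd <;> rw [Nat.not_even_iff_odd] at hodd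
  · exact hA ⟨p, p', w, h1, ⟨heven, hp⟩, ⟨hodd, hp'⟩⟩
  · exact hA ⟨p', p, w, h1.symm, ⟨heven, hp'⟩, ⟨hodd, hp⟩⟩

lemma eventually_stronglySafe_of_ultSafeFrom_max {q₀ : Q} {x : ℕ} {w : ℕ → α}
    (hult : A.UltSafeFrom q₀ x w) (hmax : ∀ y, A.UltSafeFrom q₀ y w → y ≤ x) :
    ∀ᶠ N in atTop, ∃ p, A.layer p = x ∧
      A.runList q₀ (wordPrefix w N) = some (A.muHat 1 p) ∧ A.StronglySafe p (wordDrop w N) := by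
  obtain ⟨n, p, rfl, hrun, hsafe⟩ := hult
  rw [safeInf_layer_wordDrop_iff] at hsafe
  filter_upwards [eventually_ge_atTop n] with N hN
  obtain ⟨pN, hpN⟩ := Option.isSome_iff_exists.1 (hsafe N hN)
  have hlayer := layer_eq_of_runList_eq_some hpN
  have hq₀ : A.runList q₀ (wordPrefix w N) = some (A.muHat 1 pN) := by
    rw [wordPrefix_eq_wordSeg, ← wordSeg_append_wordSeg w n.zero_le hN, runList_append,
      ← wordPrefix_eq_wordSeg, hrun, Option.bind_some]
    exact runList_muHat hpN le_rfl (A.layer_pos p)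
  refine ⟨pN, hlayer, hq₀, ?_, fun k p' hp' hrun' hsafe' => ?_⟩
  · rw [safeInf_layer_wordDrop_iff]
    intro m hm
    have := hsafe m (hN.trans hm)
    rwa [← wordSeg_append_wordSeg w hN hm, runList_append, hpN, Option.bind_some] at this
  · have hup : A.UltSafeFrom q₀ (A.layer p + 1) w := by
      refine ⟨N + k, p', hlayer ▸ hp', ?_, by rwa [wordDrop_wordDrop, hp', hlayer] at hsafe'⟩
      rw [wordPrefix_wordDrop] at hrun'
      rw [wordPrefix_eq_wordSeg, ← wordSeg_append_wordSeg w N.zero_le (N.le_add_right k),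
        runList_append, ← wordPrefix_eq_wordSeg, hq₀, Option.bind_some,
        ← muHat_one_μ (by have := A.layer_pos pN; omega : 1 < A.layer p')]
      exact runList_muHat hrun' le_rfl (A.layer_pos pN)
    have := hmax _ hup
    omega

def FollowsLongestSuffix (A : Layered Q α d) (w : ℕ → α) (ρ : ℕ → Q) (j : ℕ) : Prop :=
  ∀ q', A.semStep (ρ j) (w j) q' →
    A.longestSuffixLen (wordPrefix w (j + 1)) (A.muHat (A.runPrios w ρ j + 1) q') ≤
      A.longestSuffixLen (wordPrefix w (j + 1)) (A.muHat (A.runPrios w ρ j + 1) (ρ (j + 1)))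

lemma map_snd_history (w : ℕ → α) (ρ : ℕ → Q) (j : ℕ) :
    (List.ofFn fun i : Fin j => (ρ i, w i)).map Prod.snd ++ [w j] = wordPrefix w (j + 1) := by
  rw [List.map_ofFn, wordPrefix_succ]
  rfl

lemma IsLongestSuffixResolverE.followsLongestSuffix {σ : List (Q × α) → Q → α → Q}
    (hσ : A.IsLongestSuffixResolverE [] σ) {w : ℕ → α} {ρ : ℕ → Q} (hρ : A.ConsEve σ w ρ)
    {j : ℕ} (hj : Odd (A.runPrios w ρ j)) : A.FollowsLongestSuffix w ρ j := by
  intro q' hq'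
  have := hσ.2 (List.ofFn fun i : Fin j => (ρ i, w i)) _ _ hj q' hq'
  rwa [List.nil_append, map_snd_history, ← hρ j hj] at this

lemma IsLongestSuffixResolverA.followsLongestSuffix {τ : List (Q × α) → Q → α → Q}
    (hτ : A.IsLongestSuffixResolverA [] τ) {w : ℕ → α} {ρ : ℕ → Q} (hρ : A.ConsAdam τ w ρ)
    {j : ℕ} (hj : Even (A.runPrios w ρ j)) : A.FollowsLongestSuffix w ρ j := by
  intro q' hq'
  have := hτ.2 (List.ofFn fun i : Fin j => (ρ i, w i)) _ _ hj q' hq'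
  rwa [List.nil_append, map_snd_history, ← hρ j hj] at this

variable {w : ℕ → α} {q : Q} {ρ : ℕ → Q}

lemma IsSemRun.lt_runPrios_of_total_run (hρ : A.IsSemRun w q ρ) {l n s : ℕ} {p : Q}
    (hs : s ≤ n) (hlayer : ∀ m, n ≤ m → l + 1 ≤ A.layer (ρ m))
    (hrun : A.runList p (wordSeg w s n) = some (A.muHat (l + 1) (ρ n)))
    (htot : ∀ m, (A.runList p (wordSeg w s m)).isSome) {m : ℕ} (hm : n ≤ m) :
    l < A.runPrios w ρ m := by
  have hδ : ∀ m, n ≤ m → A.runList p (wordSeg w s m) = some (A.muHat (l + 1) (ρ m)) →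
      l < A.runPrios w ρ m := by
    intro m hm hrunm
    have := htot (m + 1)
    rw [wordSeg_succ w (hs.trans hm), runList_append, hrunm, Option.bind_some,
      runList_singleton] at this
    exact le_layerOf (hlayer m hm) this
  refine hδ m hm ?_
  induction m, hm using Nat.le_induction with
  | base => exact hrun
  | succ m hm ih =>
    rw [wordSeg_succ w (hs.trans hm), runList_append, ih, Option.bind_some, runList_singleton]
    exact δ_muHat_of_semStep (hρ.2 m) (by omega) (hδ m hm ih)

lemma IsSemRun.exists_runList_child (hρ : A.IsSemRun w q ρ) {l k : ℕ} (hl : 1 ≤ l)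
    (hge : ∀ i, k ≤ i → l ≤ A.runPrios w ρ i) {t : Q} (ht : 1 < A.layer t)
    (hμt : A.μ t = A.muHat l (ρ k)) (hsafe : ∀ m, k ≤ m → (A.runList t (wordSeg w k m)).isSome)
    {m : ℕ} (hm : k ≤ m) : ∃ tm, A.runList t (wordSeg w k m) = some tm ∧
      A.layer tm = A.layer t ∧ A.μ tm = A.muHat l (ρ m) := by
  obtain ⟨tm, htm⟩ := Option.isSome_iff_exists.1 (hsafe m hm)
  refine ⟨tm, htm, layer_eq_of_runList_eq_some htm, ?_⟩
  have hμtm := runList_μ htm ht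
  rw [hμt, hρ.runList_muHat hl hge hm] at hμtm
  exact (Option.some.inj hμtm).symm

lemma IsSemRun.not_safeInf_child [Finite Q] (hq : A.IsLeaf q) (hρ : A.IsSemRun w q ρ)
    {l n₀ : ℕ} (hl : 1 ≤ l) (hge : ∀ i, n₀ ≤ i → l ≤ A.runPrios w ρ i)
    (hfreq : ∃ᶠ i in atTop, A.runPrios w ρ i = l)
    (hfollow : ∀ j, A.runPrios w ρ j = l → A.FollowsLongestSuffix w ρ j)
    {k : ℕ} {t : Q} (hk : n₀ ≤ k) (ht : A.layer t = l + 1) (hμt : A.μ t = A.muHat l (ρ k)) :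
    ¬ A.SafeInf (l + 1) t (wordDrop w k) := by
  intro hsafe
  rw [← ht, safeInf_layer_wordDrop_iff] at hsafe
  have hge' : ∀ i, k ≤ i → l ≤ A.runPrios w ρ i := fun i hi => hge i (hk.trans hi)
  have htrack := fun m (hm : k ≤ m) =>
    hρ.exists_runList_child hl hge' (by omega : 1 < A.layer t) hμt hsafe hm
  have hlayer : ∀ m, k ≤ m → l + 1 ≤ A.layer (ρ m) := by
    intro m hm
    obtain ⟨tm, -, htm, hμtm⟩ := htrack m hm
    by_contra hlt
    exact hρ.isLeaf hq m tm (by omega) (hμtm.trans (muHat_of_layer_le (by omega)))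
  -- Runs from positions `≤ k` that ever die have died by position `B`.
  obtain ⟨B, hB⟩ := eventually_atTop.1 (eventually_forall_isSome_runList A w k)
  obtain ⟨j, hj, hjl⟩ := frequently_atTop.1 hfreq (max k B)
  obtain ⟨tj, htj, htjl, hμtj⟩ := htrack (j + 1) (by omega)
  rw [ht] at htjl
  obtain ⟨leaf, hleaf, hle, hleaf_tj⟩ := exists_isLeaf_muHat tj
  rw [htjl] at hle hleaf_tj
  have hstep : A.semStep (ρ j) (w j) leaf := by
    refine semStep_of_muHat_eq (hρ.2 j) hleaf ?_
    change A.muHat (A.runPrios w ρ j) _ = A.muHat (A.runPrios w ρ j) _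
    rw [hjl, muHat_eq_μ_muHat_succ (by omega), hleaf_tj, hμtj]
  have hlong : j + 1 - k ≤
      A.longestSuffixLen (wordPrefix w (j + 1)) (A.muHat (l + 1) (ρ (j + 1))) := by
    have hmax := hfollow j hjl leaf hstep
    rw [hjl, hleaf_tj] at hmax
    exact (le_longestSuffixLen (by omega) (by rw [ht, htjl]) htj).trans hmax
  set L := A.longestSuffixLen (wordPrefix w (j + 1)) (A.muHat (l + 1) (ρ (j + 1)))
  obtain ⟨p, -, hrun⟩ := exists_runList_of_longestSuffixLen_pos (lt_of_lt_of_le (by omega) hlong)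
  have htot := hB (j + 1) (by omega) (j + 1 - L) (by omega) p (by rw [hrun]; rfl)
  obtain ⟨m, hm, hml⟩ := frequently_atTop.1 hfreq (j + 1)
  exact (hρ.lt_runPrios_of_total_run (Nat.sub_le _ _) (fun m hm => hlayer m (by omega))
    hrun htot hm).ne' hml

lemma IsSemRun.stronglySafe_muHat [Finite Q] (hq : A.IsLeaf q) (hρ : A.IsSemRun w q ρ)
    {l n₀ : ℕ} (hl : 1 ≤ l) (hge : ∀ i, n₀ ≤ i → l ≤ A.runPrios w ρ i)
    (hfreq : ∃ᶠ i in atTop, A.runPrios w ρ i = l)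
    (hfollow : ∀ j, A.runPrios w ρ j = l → A.FollowsLongestSuffix w ρ j)
    {N : ℕ} (hN : n₀ ≤ N) : A.StronglySafe (A.muHat l (ρ N)) (wordDrop w N) := by
  have hproj : ∀ m, N ≤ m →
      A.runList (A.muHat l (ρ N)) (wordSeg w N m) = some (A.muHat l (ρ m)) :=
    fun m hm => hρ.runList_muHat hl (fun i hi => hge i (hN.trans hi)) hm
  have hlN : A.layer (A.muHat l (ρ N)) = l :=
    layer_muHat hl ((hge N hN).trans (A.layerOf_le_layer _ _))
  refine ⟨safeInf_layer_wordDrop_iff.2 fun m hm => by rw [hproj m hm]; rfl,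
    fun n p' hp' hrun hsafe => ?_⟩
  rw [hlN] at hp'
  rw [wordPrefix_wordDrop, hproj _ (N.le_add_right n)] at hrun
  rw [wordDrop_wordDrop, hp'] at hsafe
  exact hρ.not_safeInf_child hq hl hge hfreq hfollow (hN.trans (N.le_add_right n)) hp'
    (Option.some.inj hrun).symm hsafe

theorem IsSemRun.even_minInfOften_iff [Finite Q] (hA : A.Consistent) (hq : A.IsLeaf q)
    (hρ : A.IsSemRun w q ρ)
    (hfollow : ∀ j, A.runPrios w ρ j = minInfOften (A.runPrios w ρ) →
      A.FollowsLongestSuffix w ρ j)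
    {x : ℕ} (hult : A.UltSafeFrom (A.muHat 1 q) x w)
    (hmax : ∀ y, A.UltSafeFrom (A.muHat 1 q) y w → y ≤ x) :
    Even (minInfOften (A.runPrios w ρ)) ↔ Even x := by
  have hfreq := frequently_eq_minInfOften (A.runPrios_le w ρ)
  obtain ⟨n₀, hge⟩ := eventually_atTop.1 (eventually_minInfOften_le (A.runPrios w ρ))
  generalize minInfOften (A.runPrios w ρ) = l at hfreq hge hfollow ⊢
  obtain ⟨i, hi⟩ := hfreq.exists
  have hl : 1 ≤ l := hi ▸ A.one_le_layerOf _ _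
  obtain ⟨n₁, hsafe⟩ :=
    eventually_atTop.1 (eventually_stronglySafe_of_ultSafeFrom_max hult hmax)
  obtain ⟨p, rfl, hrun, hp⟩ := hsafe (max n₀ n₁) (le_max_right _ _)
  have hlN : l ≤ A.layer (ρ (max n₀ n₁)) :=
    (hge _ (le_max_left _ _)).trans (A.layerOf_le_layer _ _)
  have hc := hρ.stronglySafe_muHat hq hl hge hfreq hfollow (le_max_left n₀ n₁)
  have h1 : A.muHat 1 (A.muHat l (ρ (max n₀ n₁))) = A.muHat 1 p := by
    have hrun₁ := hρ.runList_muHat le_rfl (fun i _ => A.one_le_layerOf _ _) (max n₀ n₁).zero_le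
    rw [hρ.1, ← wordPrefix_eq_wordSeg, hrun] at hrun₁
    rw [muHat_muHat le_rfl hl hlN, Option.some.inj hrun₁]
  have hiff := hA.even_layer_iff h1 hc hp
  rwa [layer_muHat hl hlN] at hiff

end Layered

theorem statement_6_general {Q α : Type} [Fintype Q] {d : ℕ}
    (A : Layered Q α d) (hcons : A.Consistent)
    (q : Q) (hq : A.IsLeaf q)
    (σ : List (Q × α) → Q → α → Q) (hσ : A.IsLongestSuffixResolverE [] σ)
    (τ : List (Q × α) → Q → α → Q) (hτ : A.IsLongestSuffixResolverA [] τ)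
    (w : ℕ → α) :
    (A.LayeredAcceptFrom (A.muHat 1 q) w →
      ∀ ρ : ℕ → Q, A.IsSemRun w q ρ → A.ConsEve σ w ρ → ParityAccept (A.runPrios w ρ)) ∧
    (A.LayeredRejectFrom (A.muHat 1 q) w →
      ∀ ρ : ℕ → Q, A.IsSemRun w q ρ → A.ConsAdam τ w ρ → ¬ ParityAccept (A.runPrios w ρ)) := by
  constructor
  · rintro ⟨x, hx, hult, hmax⟩ ρ hρ hE
    by_contra hnot
    have hodd : Odd (minInfOften (A.runPrios w ρ)) := Nat.not_even_iff_odd.1 hnot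
    have hfollow j (hj : A.runPrios w ρ j = minInfOften (A.runPrios w ρ)) :=
      hσ.followsLongestSuffix hE (hj ▸ hodd)
    exact hnot ((hρ.even_minInfOften_iff hcons hq hfollow hult hmax).2 hx)
  · rintro ⟨x, hx, hult, hmax⟩ ρ hρ hA (heven : Even (minInfOften (A.runPrios w ρ)))
    have hfollow j (hj : A.runPrios w ρ j = minInfOften (A.runPrios w ρ)) :=
      hτ.followsLongestSuffix hA (hj ▸ heven)
    exact Nat.not_even_iff_odd.2 hx ((hρ.even_minInfOften_iff hcons hq hfollow hult hmax).1 heven)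

/-- Let `A` be consistent, `q` a leaf state and `σ`, `τ` longest suffix
resolvers for Eve and Adam in `⟦A⟧`.  If `w` is accepted under layered acceptance by `A`
with initial state `μ̂₁ q`, then every `σ`-run of `⟦A⟧` over `w` from `q` satisfies parity;
symmetrically, if `w` is rejected then every `τ`-run over `w` from `q` fails parity. -/
theorem statement_6 {Q α : Type} [Fintype Q] [Fintype α] [Nonempty α] {d : ℕ} (hd : 1 ≤ d)
    (A : Layered Q α d) (hcons : A.Consistent)
    (q : Q) (hq : A.IsLeaf q)
    (σ : List (Q × α) → Q → α → Q) (hσ : A.IsLongestSuffixResolverE [] σ)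
    (τ : List (Q × α) → Q → α → Q) (hτ : A.IsLongestSuffixResolverA [] τ)
    (w : ℕ → α) :
    (A.LayeredAcceptFrom (A.muHat 1 q) w →
      ∀ ρ : ℕ → Q, A.IsSemRun w q ρ → A.ConsEve σ w ρ → ParityAccept (A.runPrios w ρ)) ∧
    (A.LayeredRejectFrom (A.muHat 1 q) w →
      ∀ ρ : ℕ → Q, A.IsSemRun w q ρ → A.ConsAdam τ w ρ → ¬ ParityAccept (A.runPrios w ρ)) :=
  statement_6_general A hcons q hq σ hσ τ hτ w
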